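/- For every m ∈ ℕ and every nonempty bounded open set K ⊆ ℝ³ there exists a constant C > 0 such that for every polynomial map v : ℝ³ → ℝ³ of degree at most m there exists an antisymmetric real 3×3 matrix B with ∫_K ‖∇v(x) + B‖_F² dx ≤ C · ∫_K ‖ε(v)(x)‖_F² dx. (Equivalently, inf over rigid displacements Λ(x) = B·x + b of ∫_K ‖∇(v + Λ)(x)‖_F² dx is bounded by C times ∫_K ‖ε(v)(x)‖_F² dx.) -/

import Mathlib

/-!
Fix `x₀ ∈ K` and take `B = -(∇v(x₀) - ∇v(x₀)ᵀ) / 2`. Both sides are then squared `L²(K)`-norms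
of linear maps `A v = ∇v + B` and `S v = ε(v)` on the finite-dimensional space of polynomial maps
of degree at most `m`, and in finite dimension `‖A v‖ ≤ C ‖S v‖` holds as soon as `ker S ⊆ ker A`. If `ε(v) = 0` on the
open set `K`, then `∂ⱼvᵢ + ∂ᵢvⱼ = 0` as polynomials, so `∂ₖ∂ⱼvᵢ` is antisymmetric in `(i, j)`
and symmetric in `(j, k)`, hence zero. Thus `∇v` is a constant antisymmetric matrix and
`∇v + B = 0`.
-/

open MeasureTheory Matrix

/-- `pderiv3 v i j x` is the partial derivative `∂ⱼ vᵢ (x)` of the `i`-th component of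
`v : ℝ³ → ℝ³` in the `j`-th coordinate direction at `x`. -/
noncomputable def pderiv3 (v : (Fin 3 → ℝ) → (Fin 3 → ℝ)) (i j : Fin 3) (x : Fin 3 → ℝ) : ℝ :=
  fderiv ℝ (fun y => v y i) x (Pi.single j 1)

/-- `jacMat v x` is the Jacobian matrix `∇v(x)` with entries `(∇v(x))ᵢⱼ = ∂ⱼvᵢ(x)`. -/
noncomputable def jacMat (v : (Fin 3 → ℝ) → (Fin 3 → ℝ)) (x : Fin 3 → ℝ) :
    Matrix (Fin 3) (Fin 3) ℝ :=
  Matrix.of fun i j => pderiv3 v i j x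

/-- `symGrad v x` is the symmetric gradient `ε(v)(x)`, the 3×3 matrix with entries
`(∂ⱼvᵢ(x) + ∂ᵢvⱼ(x)) / 2`. -/
noncomputable def symGrad (v : (Fin 3 → ℝ) → (Fin 3 → ℝ)) (x : Fin 3 → ℝ) :
    Matrix (Fin 3) (Fin 3) ℝ :=
  Matrix.of fun i j => (pderiv3 v i j x + pderiv3 v j i x) / 2

/-- `frobSq M` is the square of the Frobenius norm of the matrix `M`. -/
def frobSq (M : Matrix (Fin 3) (Fin 3) ℝ) : ℝ := ∑ i, ∑ j, (M i j) ^ 2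

open MvPolynomial

open scoped Matrix.Norms.Frobenius

namespace MvPolynomial

variable {σ : Type*}

theorem pderiv_comm {R : Type*} [CommSemiring R] (i j : σ) (p : MvPolynomial σ R) :
    pderiv i (pderiv j p) = pderiv j (pderiv i p) := by
  classical
  induction p using MvPolynomial.induction_on with
  | C a => simp
  | add p q hp hq => simp [hp, hq]
  | mul_X p k hp =>
    simp only [pderiv_mul, pderiv_X, map_add, hp, Pi.single_apply, apply_ite (pderiv _),
      pderiv_one, map_zero, ite_self, mul_zero, add_zero]
    exact add_right_comm _ _ _

theorem pderiv_pderiv_eq_zero_of_add_eq_zero {R : Type*} [CommRing R] [NoZeroDivisors R]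
    [CharZero R] {P : σ → MvPolynomial σ R} (h : ∀ i j, pderiv j (P i) + pderiv i (P j) = 0) (i j k : σ) :
    pderiv k (pderiv j (P i)) = 0 := by
  have h' : ∀ a b c, pderiv a (pderiv b (P c)) = -pderiv a (pderiv c (P b)) := fun a b c =>
    eq_neg_of_add_eq_zero_left (by rw [← map_add, h, map_zero])
  refine self_eq_neg.mp ?_
  calc pderiv k (pderiv j (P i)) = -pderiv i (pderiv k (P j)) := by rw [h', pderiv_comm]
    _ = pderiv j (pderiv i (P k)) := by rw [h', neg_neg, pderiv_comm]
    _ = -pderiv k (pderiv j (P i)) := by rw [h', pderiv_comm]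

variable [Fintype σ]

theorem hasFDerivAt_eval {𝕜 : Type*} [NontriviallyNormedField 𝕜] (Q : MvPolynomial σ 𝕜)
    (x : σ → 𝕜) :
    HasFDerivAt (fun y => eval y Q)
      (∑ j, eval x (pderiv j Q) • (ContinuousLinearMap.proj j : (σ → 𝕜) →L[𝕜] 𝕜)) x := by
  classical
  induction Q using MvPolynomial.induction_on with
  | C a =>
    refine (hasFDerivAt_const a x).congr_fderiv ?_ |>.congr_of_eventuallyEq ?_
    · ext v; simp
    · exact .of_forall fun y => by simp
  | add p q hp hq =>
    refine (hp.add hq).congr_fderiv ?_ |>.congr_of_eventuallyEq ?_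
    · ext v; simp [add_mul, Finset.sum_add_distrib]
    · exact .of_forall fun y => by simp
  | mul_X p k hp =>
    refine (hp.mul (ContinuousLinearMap.proj k).hasFDerivAt).congr_fderiv ?_
      |>.congr_of_eventuallyEq ?_
    · ext v
      simp [Pi.single_apply, apply_ite (eval x), mul_add, Finset.sum_add_distrib, Finset.mul_sum,
        mul_comm, mul_left_comm]
    · exact .of_forall fun y => by simp

variable {𝕜 : Type*} [RCLike 𝕜]

theorem fderiv_eval_apply_single [DecidableEq σ] (Q : MvPolynomial σ 𝕜) (x : σ → 𝕜) (j : σ) :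
    fderiv 𝕜 (fun y => eval y Q) x (Pi.single j 1) = eval x (pderiv j Q) := by
  simp [(hasFDerivAt_eval Q x).fderiv, Pi.single_apply]

theorem eval_eq_of_forall_pderiv_eq_zero {Q : MvPolynomial σ 𝕜} (h : ∀ k, pderiv k Q = 0)
    (x y : σ → 𝕜) : eval x Q = eval y Q :=
  is_const_of_fderiv_eq_zero (fun z => (hasFDerivAt_eval Q z).differentiableAt)
    (fun z => by ext v; simp [(hasFDerivAt_eval Q z).fderiv, h]) x y

theorem eq_zero_of_isOpen_of_eval_eq_zero {Q : MvPolynomial σ 𝕜} {K : Set (σ → 𝕜)}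
    (hKo : IsOpen K) (hKne : K.Nonempty) (h : ∀ x ∈ K, eval x Q = 0) : Q = 0 := by
  obtain ⟨z, hz⟩ := hKne
  have := (AnalyticOnNhd.eval_mvPolynomial Q).eqOn_zero_of_preconnected_of_eventuallyEq_zero
    isPreconnected_univ (Set.mem_univ z) (Filter.eventually_of_mem (hKo.mem_nhds hz) h)
  exact MvPolynomial.funext fun x => by simpa using this (Set.mem_univ x)

end MvPolynomial

theorem LinearMap.exists_norm_le_mul_norm_of_ker_le {V E F : Type*} [AddCommGroup V]
    [Module ℝ V] [FiniteDimensional ℝ V] [NormedAddCommGroup E] [NormedSpace ℝ E]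
    [NormedAddCommGroup F] [NormedSpace ℝ F] (A : V →ₗ[ℝ] F) (S : V →ₗ[ℝ] E)
    (h : ker S ≤ ker A) : ∃ C > 0, ∀ v, ‖A v‖ ≤ C * ‖S v‖ := by
  let φ : range S →L[ℝ] F :=
    LinearMap.toContinuousLinearMap ((ker S).liftQ A h ∘ₗ S.quotKerEquivRange.symm.toLinearMap)
  have hφ : ∀ v, φ ⟨S v, mem_range_self S v⟩ = A v := fun v => by
    simp [φ, quotKerEquivRange_symm_apply_image]
  refine ⟨‖φ‖ + 1, by positivity, fun v => ?_⟩
  calc ‖A v‖ = ‖φ ⟨S v, mem_range_self S v⟩‖ := by rw [hφ]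
    _ ≤ ‖φ‖ * ‖S v‖ := φ.le_opNorm _
    _ ≤ (‖φ‖ + 1) * ‖S v‖ := by gcongr; linarith

namespace MeasureTheory

theorem MemLp.norm_toLp_sq {α E : Type*} [MeasurableSpace α] {μ : Measure α}
    [NormedAddCommGroup E] {f : α → E} (hf : MemLp f 2 μ) :
    ‖hf.toLp f‖ ^ 2 = ∫ a, ‖f a‖ ^ 2 ∂μ := by
  rw [Lp.norm_toLp, toReal_eLpNorm hf.aestronglyMeasurable]
  have := lpNorm_nnreal_eq_integral_norm_rpow (p := 2) two_ne_zero hf.aestronglyMeasurable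
  simp only [NNReal.coe_ofNat, ENNReal.coe_ofNat] at this
  rw [this, ← Real.rpow_natCast, ← Real.rpow_mul (integral_nonneg fun a => by positivity)]
  norm_num

theorem _root_.Continuous.memLp_restrict_of_isBounded {X E : Type*} [MetricSpace X]
    [ProperSpace X] [MeasurableSpace X] [OpensMeasurableSpace X] {μ : Measure X}
    [IsFiniteMeasureOnCompacts μ] [NormedAddCommGroup E] {f : X → E} (hf : Continuous f)
    {K : Set X} (hK : Bornology.IsBounded K) (p : ENNReal) : MemLp f p (μ.restrict K) := by
  have hKc := hK.isCompact_closure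
  have : IsFiniteMeasure (μ.restrict (closure K)) :=
    isFiniteMeasure_restrict.mpr hKc.measure_lt_top.ne
  obtain ⟨C, hC⟩ := hKc.exists_bound_of_continuousOn hf.continuousOn
  refine (MemLp.of_bound hf.aestronglyMeasurable C ?_).mono_measure
    (Measure.restrict_mono subset_closure le_rfl)
  exact ae_restrict_of_forall_mem isClosed_closure.measurableSet hC

variable {V α E : Type*} [AddCommGroup V] [Module ℝ V] [MeasurableSpace α] {μ : Measure α}
  [NormedAddCommGroup E] [NormedSpace ℝ E]

noncomputable def _root_.LinearMap.toLp (T : V →ₗ[ℝ] α → E) (hT : ∀ v, MemLp (T v) 2 μ) :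
    V →ₗ[ℝ] Lp E 2 μ where
  toFun v := (hT v).toLp (T v)
  map_add' v w := (MemLp.toLp_congr _ _ (.of_eq (map_add T v w))).trans (MemLp.toLp_add _ _)
  map_smul' c v :=
    (MemLp.toLp_congr _ _ (.of_eq (map_smul T c v))).trans (MemLp.toLp_const_smul _ _)

theorem _root_.LinearMap.toLp_apply_eq_zero_iff (T : V →ₗ[ℝ] α → E)
    (hT : ∀ v, MemLp (T v) 2 μ) (v : V) : T.toLp hT v = 0 ↔ T v =ᵐ[μ] 0 :=
  MemLp.toLp_eq_toLp_iff (hT v) MemLp.zero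

theorem exists_integral_norm_sq_le_of_ae_eq_zero [FiniteDimensional ℝ V]
    (A S : V →ₗ[ℝ] α → E) (hA : ∀ v, MemLp (A v) 2 μ) (hS : ∀ v, MemLp (S v) 2 μ)
    (hker : ∀ v, S v =ᵐ[μ] 0 → A v =ᵐ[μ] 0) :
    ∃ C > 0, ∀ v, ∫ a, ‖A v a‖ ^ 2 ∂μ ≤ C * ∫ a, ‖S v a‖ ^ 2 ∂μ := by
  obtain ⟨C, hC, hle⟩ := (A.toLp hA).exists_norm_le_mul_norm_of_ker_le (S.toLp hS) fun v hv => by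
    simp only [LinearMap.mem_ker, LinearMap.toLp_apply_eq_zero_iff] at hv ⊢
    exact hker v hv
  refine ⟨C ^ 2, by positivity, fun v => ?_⟩
  rw [← (hA v).norm_toLp_sq, ← (hS v).norm_toLp_sq, ← mul_pow]
  exact pow_le_pow_left₀ (norm_nonneg _) (hle v) 2

end MeasureTheory

section Jacobian

variable {σ : Type*}

noncomputable def polyJac {R : Type*} [CommSemiring R] (P : σ → MvPolynomial σ R) (x : σ → R) :
    Matrix σ σ R :=
  of fun i j => eval x (pderiv j (P i))

@[simp]
theorem polyJac_add (P Q : σ → MvPolynomial σ ℝ) (x : σ → ℝ) :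
    polyJac (P + Q) x = polyJac P x + polyJac Q x := by
  ext; simp [polyJac]

@[simp]
theorem polyJac_smul (c : ℝ) (P : σ → MvPolynomial σ ℝ) (x : σ → ℝ) :
    polyJac (c • P) x = c • polyJac P x := by
  ext; simp [polyJac]

theorem continuous_polyJac (P : σ → MvPolynomial σ ℝ) : Continuous (polyJac P) :=
  continuous_matrix fun _ _ => MvPolynomial.continuous_eval _

noncomputable def polySymGrad : (σ → MvPolynomial σ ℝ) →ₗ[ℝ] (σ → ℝ) → Matrix σ σ ℝ where
  toFun P x := (1 / 2 : ℝ) • (polyJac P x + (polyJac P x)ᵀ)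
  map_add' P Q := funext fun x => by
    simp only [polyJac_add, transpose_add, Pi.add_apply]
    module
  map_smul' c P := funext fun x => by
    simp only [polyJac_smul, transpose_smul, Pi.smul_apply, RingHom.id_apply]
    module

noncomputable def polyJacSubSkewAt (x₀ : σ → ℝ) :
    (σ → MvPolynomial σ ℝ) →ₗ[ℝ] (σ → ℝ) → Matrix σ σ ℝ where
  toFun P x := polyJac P x - (1 / 2 : ℝ) • (polyJac P x₀ - (polyJac P x₀)ᵀ)
  map_add' P Q := funext fun x => by
    simp only [polyJac_add, transpose_add, Pi.add_apply]
    module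
  map_smul' c P := funext fun x => by
    simp only [polyJac_smul, transpose_smul, Pi.smul_apply, RingHom.id_apply]
    module

variable [Fintype σ]

theorem polyJacSubSkewAt_eq_zero {K : Set (σ → ℝ)} (hKo : IsOpen K) {x₀ : σ → ℝ} (hx₀ : x₀ ∈ K)
    {P : σ → MvPolynomial σ ℝ} (h : ∀ x ∈ K, polySymGrad P x = 0) (x : σ → ℝ) :
    polyJacSubSkewAt x₀ P x = 0 := by
  have hsymm : ∀ i j, pderiv j (P i) + pderiv i (P j) = 0 := fun i j =>
    eq_zero_of_isOpen_of_eval_eq_zero hKo ⟨x₀, hx₀⟩ fun y hy => by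
      have hy : (1 / 2 : ℝ) * (eval y (pderiv j (P i)) + eval y (pderiv i (P j))) = 0 :=
        congrFun₂ (h y hy) i j
      rw [map_add]
      linear_combination 2 * hy
  have hconst : polyJac P x = polyJac P x₀ := by
    ext i j
    exact eval_eq_of_forall_pderiv_eq_zero
      (fun k => pderiv_pderiv_eq_zero_of_add_eq_zero hsymm i j k) x x₀
  have hskew : (polyJac P x₀)ᵀ = -polyJac P x₀ := by
    ext i j
    exact eq_neg_of_add_eq_zero_left (by simpa [polyJac] using congrArg (eval x₀) (hsymm j i))
  simp only [polyJacSubSkewAt, LinearMap.coe_mk, AddHom.coe_mk, hconst, hskew, sub_neg_eq_add]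
  module

theorem exists_integral_norm_polyJacSubSkewAt_sq_le {K : Set (σ → ℝ)} (hKo : IsOpen K)
    (hKbd : Bornology.IsBounded K) {x₀ : σ → ℝ} (hx₀ : x₀ ∈ K)
    (V : Submodule ℝ (σ → MvPolynomial σ ℝ)) [FiniteDimensional ℝ V] :
    ∃ C > 0, ∀ P ∈ V,
      ∫ x in K, ‖polyJacSubSkewAt x₀ P x‖ ^ 2 ≤ C * ∫ x in K, ‖polySymGrad P x‖ ^ 2 := by
  have hA : ∀ P : σ → MvPolynomial σ ℝ, Continuous (polyJacSubSkewAt x₀ P) := fun P =>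
    (continuous_polyJac P).sub continuous_const
  have hS : ∀ P : σ → MvPolynomial σ ℝ, Continuous (polySymGrad P) := fun P =>
    ((continuous_polyJac P).add (continuous_polyJac P).matrix_transpose).const_smul (1 / 2 : ℝ)
  obtain ⟨C, hC, hle⟩ := exists_integral_norm_sq_le_of_ae_eq_zero (μ := volume.restrict K)
    (polyJacSubSkewAt x₀ ∘ₗ V.subtype) (polySymGrad ∘ₗ V.subtype)
    (fun P => (hA P).memLp_restrict_of_isBounded hKbd 2)
    (fun P => (hS P).memLp_restrict_of_isBounded hKbd 2)
    fun P hP => .of_forall <| polyJacSubSkewAt_eq_zero hKo hx₀ fun y hy =>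
      Measure.eqOn_open_of_ae_eq hP hKo (hS P).continuousOn continuousOn_const hy
  exact ⟨C, hC, fun P hP => hle ⟨P, hP⟩⟩

end Jacobian

theorem jacMat_eval_eq_polyJac (P : Fin 3 → MvPolynomial (Fin 3) ℝ) (x : Fin 3 → ℝ) :
    jacMat (fun y i => eval y (P i)) x = polyJac P x := by
  ext i j
  simp [jacMat, pderiv3, polyJac, fderiv_eval_apply_single]

theorem symGrad_eq_smul_add_transpose (v : (Fin 3 → ℝ) → Fin 3 → ℝ) (x : Fin 3 → ℝ) :
    symGrad v x = (1 / 2 : ℝ) • (jacMat v x + (jacMat v x)ᵀ) := by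
  ext i j
  simp only [symGrad, jacMat, of_apply, Matrix.smul_apply, Matrix.add_apply, transpose_apply,
    smul_eq_mul]
  ring

theorem frobSq_eq_norm_sq (M : Matrix (Fin 3) (Fin 3) ℝ) : frobSq M = ‖M‖ ^ 2 := by
  rw [frobenius_norm_def, ← Real.rpow_natCast, ← Real.rpow_mul (by positivity)]
  simp [frobSq]

/-- Elementwise Korn inequality on a single element `K` for the polynomial local space:
for every degree bound `m` and nonempty bounded open `K ⊆ ℝ³` there is `C > 0` such that
every polynomial map `v` of degree at most `m` admits an antisymmetric matrix `B` with
`∫_K ‖∇v + B‖_F² ≤ C ∫_K ‖ε(v)‖_F²`. -/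
theorem korn_polynomial (m : ℕ) (K : Set (Fin 3 → ℝ)) (hKo : IsOpen K) (hKne : K.Nonempty)
    (hKbd : Bornology.IsBounded K) :
    ∃ C > 0, ∀ P : Fin 3 → MvPolynomial (Fin 3) ℝ, (∀ i, (P i).totalDegree ≤ m) →
      ∃ B : Matrix (Fin 3) (Fin 3) ℝ, Bᵀ = -B ∧
        (∫ x in K, frobSq (jacMat (fun y i => MvPolynomial.eval y (P i)) x + B)) ≤
          C * ∫ x in K, frobSq (symGrad (fun y i => MvPolynomial.eval y (P i)) x) := by
  obtain ⟨x₀, hx₀⟩ := hKne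
  let V := LinearMap.range
    (LinearMap.piMap fun _ : Fin 3 => (restrictTotalDegree (Fin 3) ℝ m).subtype)
  obtain ⟨C, hC, hle⟩ := exists_integral_norm_polyJacSubSkewAt_sq_le hKo hKbd hx₀ V
  refine ⟨C, hC, fun P hP => ⟨-((1 / 2 : ℝ) • (polyJac P x₀ - (polyJac P x₀)ᵀ)), ?_, ?_⟩⟩
  · simp only [transpose_neg, transpose_smul, transpose_sub, transpose_transpose]
    module
  have hPV : P ∈ V := ⟨fun i => ⟨P i, (mem_restrictTotalDegree _ _ _).2 (hP i)⟩, rfl⟩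
  simpa [frobSq_eq_norm_sq, jacMat_eval_eq_polyJac, symGrad_eq_smul_add_transpose, polyJacSubSkewAt,
    polySymGrad, sub_eq_add_neg] using hle P hPV
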